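/- The gradient of the dual objective d(P,Q,R) = −‖H_C(S − λL(P,Q,R))‖_F² + ‖S − λL(P,Q,R)‖_F², with L the 3D divergence operator, is Lipschitz continuous with Lipschitz constant at most 24λ². -/

import Mathlib

open Finset

/-- Extension of a 3rd-order tensor by zero outside its index range. -/
noncomputable def ext3 {a b c : ℕ} (P : Fin a → Fin b → Fin c → ℝ) (i j k : ℤ) : ℝ :=
  if h : 0 ≤ i ∧ i < (a : ℤ) ∧ 0 ≤ j ∧ j < (b : ℤ) ∧ 0 ≤ k ∧ k < (c : ℤ) then
    P ⟨i.toNat, by omega⟩ ⟨j.toNat, by omega⟩ ⟨k.toNat, by omega⟩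
  else 0

/-- The divergence-type operator `L` with zero boundary convention. -/
noncomputable def Ldiv {m n K : ℕ}
    (P : Fin m → Fin (n + 1) → Fin (K + 1) → ℝ)
    (Q : Fin (m + 1) → Fin n → Fin (K + 1) → ℝ)
    (R : Fin (m + 1) → Fin (n + 1) → Fin K → ℝ)
    (i : Fin (m + 1)) (j : Fin (n + 1)) (k : Fin (K + 1)) : ℝ :=
  ext3 P i j k + ext3 Q i j k + ext3 R i j k
    - ext3 P ((i : ℤ) - 1) j k - ext3 Q i ((j : ℤ) - 1) k - ext3 R i j ((k : ℤ) - 1)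

/-- The difference operator `Lᵀ`, adjoint of `Ldiv`. -/
noncomputable def diffOp {m n K : ℕ} (T : Fin (m + 1) → Fin (n + 1) → Fin (K + 1) → ℝ) :
    (Fin m → Fin (n + 1) → Fin (K + 1) → ℝ) × (Fin (m + 1) → Fin n → Fin (K + 1) → ℝ) ×
      (Fin (m + 1) → Fin (n + 1) → Fin K → ℝ) :=
  (fun i j k => T i.castSucc j k - T i.succ j k,
   fun i j k => T i j.castSucc k - T i j.succ k,
   fun i j k => T i j k.castSucc - T i j k.succ)

/-- Frobenius norm on `ℝ^{(m+1)×(n+1)×(K+1)}`. -/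
noncomputable def fnorm {m n K : ℕ} (T : Fin (m + 1) → Fin (n + 1) → Fin (K + 1) → ℝ) : ℝ :=
  Real.sqrt (∑ i, ∑ j, ∑ k, (T i j k) ^ 2)

/-- Frobenius norm on the space of triples `(P, Q, R)`. -/
noncomputable def tnorm {m n K : ℕ}
    (v : (Fin m → Fin (n + 1) → Fin (K + 1) → ℝ) × (Fin (m + 1) → Fin n → Fin (K + 1) → ℝ) ×
      (Fin (m + 1) → Fin (n + 1) → Fin K → ℝ)) : ℝ :=
  Real.sqrt ((∑ i, ∑ j, ∑ k, (v.1 i j k) ^ 2) + (∑ i, ∑ j, ∑ k, (v.2.1 i j k) ^ 2) +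
    (∑ i, ∑ j, ∑ k, (v.2.2 i j k) ^ 2))

section Aux
variable {a b c : ℕ}

lemma ext3_zero (P : Fin a → Fin b → Fin c → ℝ) {i j k : ℤ}
    (h : ¬(0 ≤ i ∧ i < (a : ℤ) ∧ 0 ≤ j ∧ j < (b : ℤ) ∧ 0 ≤ k ∧ k < (c : ℤ))) :
    ext3 P i j k = 0 := dif_neg h

lemma ext3_fin (P : Fin a → Fin b → Fin c → ℝ) (i : Fin a) (j : Fin b) (k : Fin c) :
    ext3 P (i : ℤ) (j : ℤ) (k : ℤ) = P i j k := by
  rw [ext3, dif_pos]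
  · simp
  · refine ⟨by positivity, ?_, by positivity, ?_, by positivity, ?_⟩ <;> exact_mod_cast Fin.isLt _

lemma ext3_sub (P P' : Fin a → Fin b → Fin c → ℝ) (i j k : ℤ) :
    ext3 (P - P') i j k = ext3 P i j k - ext3 P' i j k := by
  unfold ext3; split <;> simp

end Aux

section Sums
variable {m n K : ℕ}

lemma EP1 (P : Fin m → Fin (n + 1) → Fin (K + 1) → ℝ) :
    ∑ i : Fin (m + 1), ∑ j : Fin (n + 1), ∑ k : Fin (K + 1), (ext3 P i j k) ^ 2
      = ∑ i : Fin m, ∑ j, ∑ k, (P i j k) ^ 2 := by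
  rw [Fin.sum_univ_castSucc]
  have hlast : ∑ j : Fin (n + 1), ∑ k : Fin (K + 1),
      (ext3 P ((Fin.last m : Fin (m+1)) : ℤ) j k) ^ 2 = 0 := by
    apply Finset.sum_eq_zero; intro j _; apply Finset.sum_eq_zero; intro k _
    rw [ext3_zero]; · ring
    · simp only [Fin.val_last]; push_neg; intro _ h; omega
  rw [hlast, add_zero]
  apply Finset.sum_congr rfl; intro i _
  apply Finset.sum_congr rfl; intro j _
  apply Finset.sum_congr rfl; intro k _
  have h : ((i.castSucc : Fin (m+1)) : ℤ) = (i : ℤ) := by simp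
  rw [h, ext3_fin]

lemma EP2 (P : Fin m → Fin (n + 1) → Fin (K + 1) → ℝ) :
    ∑ i : Fin (m + 1), ∑ j : Fin (n + 1), ∑ k : Fin (K + 1), (ext3 P ((i : ℤ) - 1) j k) ^ 2
      = ∑ i : Fin m, ∑ j, ∑ k, (P i j k) ^ 2 := by
  rw [Fin.sum_univ_succ]
  have h0 : ∑ j : Fin (n + 1), ∑ k : Fin (K + 1),
      (ext3 P (((0 : Fin (m+1)) : ℤ) - 1) j k) ^ 2 = 0 := by
    apply Finset.sum_eq_zero; intro j _; apply Finset.sum_eq_zero; intro k _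
    rw [ext3_zero]; · ring
    · simp only [Fin.val_zero]; push_neg; intro h; omega
  rw [h0, zero_add]
  apply Finset.sum_congr rfl; intro i _
  apply Finset.sum_congr rfl; intro j _
  apply Finset.sum_congr rfl; intro k _
  have h : ((i.succ : Fin (m+1)) : ℤ) - 1 = (i : ℤ) := by simp
  rw [h, ext3_fin]

end Sums

section Sums2
variable {m n K : ℕ}

lemma EQ1 (Q : Fin (m + 1) → Fin n → Fin (K + 1) → ℝ) :
    ∑ i : Fin (m + 1), ∑ j : Fin (n + 1), ∑ k : Fin (K + 1), (ext3 Q i j k) ^ 2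
      = ∑ i : Fin (m + 1), ∑ j : Fin n, ∑ k, (Q i j k) ^ 2 := by
  apply Finset.sum_congr rfl; intro i _
  rw [Fin.sum_univ_castSucc (f := fun j : Fin (n+1) => ∑ k : Fin (K + 1), (ext3 Q i j k) ^ 2)]
  have hlast : ∑ k : Fin (K + 1), (ext3 Q (i : ℤ) ((Fin.last n : Fin (n+1)) : ℤ) k) ^ 2 = 0 := by
    apply Finset.sum_eq_zero; intro k _
    rw [ext3_zero]; · ring
    · simp only [Fin.val_last]; push_neg; intro _ _ _ h; omega
  rw [hlast, add_zero]
  apply Finset.sum_congr rfl; intro j _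
  apply Finset.sum_congr rfl; intro k _
  have h : ((j.castSucc : Fin (n+1)) : ℤ) = (j : ℤ) := by simp
  rw [h, ext3_fin]

lemma EQ2 (Q : Fin (m + 1) → Fin n → Fin (K + 1) → ℝ) :
    ∑ i : Fin (m + 1), ∑ j : Fin (n + 1), ∑ k : Fin (K + 1), (ext3 Q i ((j : ℤ) - 1) k) ^ 2
      = ∑ i : Fin (m + 1), ∑ j : Fin n, ∑ k, (Q i j k) ^ 2 := by
  apply Finset.sum_congr rfl; intro i _
  rw [Fin.sum_univ_succ (f := fun j : Fin (n+1) => ∑ k : Fin (K + 1), (ext3 Q i ((j : ℤ) - 1) k) ^ 2)]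
  have h0 : ∑ k : Fin (K + 1), (ext3 Q (i : ℤ) (((0 : Fin (n+1)) : ℤ) - 1) k) ^ 2 = 0 := by
    apply Finset.sum_eq_zero; intro k _
    rw [ext3_zero]; · ring
    · simp only [Fin.val_zero]; push_neg; intro _ _ h; omega
  rw [h0, zero_add]
  apply Finset.sum_congr rfl; intro j _
  apply Finset.sum_congr rfl; intro k _
  have h : ((j.succ : Fin (n+1)) : ℤ) - 1 = (j : ℤ) := by simp
  rw [h, ext3_fin]

lemma ER1 (R : Fin (m + 1) → Fin (n + 1) → Fin K → ℝ) :
    ∑ i : Fin (m + 1), ∑ j : Fin (n + 1), ∑ k : Fin (K + 1), (ext3 R i j k) ^ 2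
      = ∑ i : Fin (m + 1), ∑ j, ∑ k : Fin K, (R i j k) ^ 2 := by
  apply Finset.sum_congr rfl; intro i _
  apply Finset.sum_congr rfl; intro j _
  rw [Fin.sum_univ_castSucc (f := fun k : Fin (K+1) => (ext3 R i j k) ^ 2)]
  have hlast : (ext3 R (i : ℤ) (j : ℤ) ((Fin.last K : Fin (K+1)) : ℤ)) ^ 2 = 0 := by
    rw [ext3_zero]; · ring
    · simp only [Fin.val_last]; push_neg; intro _ _ _ _ _; omega
  rw [hlast, add_zero]
  apply Finset.sum_congr rfl; intro k _
  have h : ((k.castSucc : Fin (K+1)) : ℤ) = (k : ℤ) := by simp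
  rw [h, ext3_fin]

lemma ER2 (R : Fin (m + 1) → Fin (n + 1) → Fin K → ℝ) :
    ∑ i : Fin (m + 1), ∑ j : Fin (n + 1), ∑ k : Fin (K + 1), (ext3 R i j ((k : ℤ) - 1)) ^ 2
      = ∑ i : Fin (m + 1), ∑ j, ∑ k : Fin K, (R i j k) ^ 2 := by
  apply Finset.sum_congr rfl; intro i _
  apply Finset.sum_congr rfl; intro j _
  rw [Fin.sum_univ_succ (f := fun k : Fin (K+1) => (ext3 R i j ((k : ℤ) - 1)) ^ 2)]
  have h0 : (ext3 R (i : ℤ) (j : ℤ) (((0 : Fin (K+1)) : ℤ) - 1)) ^ 2 = 0 := by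
    rw [ext3_zero]; · ring
    · simp only [Fin.val_zero]; push_neg; intro _ _ _ _ h; omega
  rw [h0, zero_add]
  apply Finset.sum_congr rfl; intro k _
  have h : ((k.succ : Fin (K+1)) : ℤ) - 1 = (k : ℤ) := by simp
  rw [h, ext3_fin]

end Sums2

section Bounds
variable {m n K : ℕ}

lemma Ldiv_bound (P : Fin m → Fin (n + 1) → Fin (K + 1) → ℝ)
    (Q : Fin (m + 1) → Fin n → Fin (K + 1) → ℝ)
    (R : Fin (m + 1) → Fin (n + 1) → Fin K → ℝ) :
    (∑ i : Fin (m+1), ∑ j : Fin (n+1), ∑ k : Fin (K+1), (Ldiv P Q R i j k)^2)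
      ≤ 12 * ((∑ i, ∑ j, ∑ k, (P i j k)^2) + (∑ i, ∑ j, ∑ k, (Q i j k)^2)
          + (∑ i, ∑ j, ∑ k, (R i j k)^2)) := by
  have step : ∀ (i : Fin (m+1)) (j : Fin (n+1)) (k : Fin (K+1)), (Ldiv P Q R i j k)^2
      ≤ 6 * ((ext3 P i j k)^2 + (ext3 Q i j k)^2 + (ext3 R i j k)^2
        + (ext3 P ((i:ℤ)-1) j k)^2 + (ext3 Q i ((j:ℤ)-1) k)^2 + (ext3 R i j ((k:ℤ)-1))^2) := by
    intro i j k
    rw [Ldiv]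
    set a := ext3 P (i:ℤ) (j:ℤ) (k:ℤ); set b := ext3 Q (i:ℤ) (j:ℤ) (k:ℤ)
    set c := ext3 R (i:ℤ) (j:ℤ) (k:ℤ); set d := ext3 P ((i:ℤ)-1) (j:ℤ) (k:ℤ)
    set e := ext3 Q (i:ℤ) ((j:ℤ)-1) (k:ℤ); set f := ext3 R (i:ℤ) (j:ℤ) ((k:ℤ)-1)
    nlinarith [sq_nonneg (a-b), sq_nonneg (a-c), sq_nonneg (a+d), sq_nonneg (a+e),
      sq_nonneg (a+f), sq_nonneg (b-c), sq_nonneg (b+d), sq_nonneg (b+e), sq_nonneg (b+f),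
      sq_nonneg (c+d), sq_nonneg (c+e), sq_nonneg (c+f), sq_nonneg (d-e), sq_nonneg (d-f),
      sq_nonneg (e-f)]
  calc (∑ i : Fin (m+1), ∑ j : Fin (n+1), ∑ k : Fin (K+1), (Ldiv P Q R i j k)^2)
      ≤ ∑ i : Fin (m+1), ∑ j : Fin (n+1), ∑ k : Fin (K+1),
        6 * ((ext3 P i j k)^2 + (ext3 Q i j k)^2 + (ext3 R i j k)^2
          + (ext3 P ((i:ℤ)-1) j k)^2 + (ext3 Q i ((j:ℤ)-1) k)^2 + (ext3 R i j ((k:ℤ)-1))^2) := by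
        apply Finset.sum_le_sum; intro i _; apply Finset.sum_le_sum; intro j _
        apply Finset.sum_le_sum; intro k _; exact step i j k
    _ = 6 * ((∑ i : Fin (m+1), ∑ j : Fin (n+1), ∑ k : Fin (K+1), (ext3 P i j k)^2)
          + (∑ i : Fin (m+1), ∑ j : Fin (n+1), ∑ k : Fin (K+1), (ext3 Q i j k)^2)
          + (∑ i : Fin (m+1), ∑ j : Fin (n+1), ∑ k : Fin (K+1), (ext3 R i j k)^2)
          + (∑ i : Fin (m+1), ∑ j : Fin (n+1), ∑ k : Fin (K+1), (ext3 P ((i:ℤ)-1) j k)^2)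
          + (∑ i : Fin (m+1), ∑ j : Fin (n+1), ∑ k : Fin (K+1), (ext3 Q i ((j:ℤ)-1) k)^2)
          + (∑ i : Fin (m+1), ∑ j : Fin (n+1), ∑ k : Fin (K+1), (ext3 R i j ((k:ℤ)-1))^2)) := by
        simp only [Finset.sum_add_distrib, ← Finset.mul_sum]
    _ ≤ _ := by rw [EP1, EQ1, ER1, EP2, EQ2, ER2]; ring_nf; linarith []
end Bounds

section Diff
variable {m n K : ℕ}

lemma key1 {N : ℕ} {ι : Type*} [Fintype ι] (u : Fin (N+1) → ι → ℝ) :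
    ∑ i : Fin N, ∑ x, (u i.castSucc x - u i.succ x)^2 ≤ 4 * ∑ i, ∑ x, (u i x)^2 := by
  have hG : ∀ i, (0:ℝ) ≤ ∑ x, (u i x)^2 := fun i => Finset.sum_nonneg fun _ _ => sq_nonneg _
  have step : ∑ i : Fin N, ∑ x, (u i.castSucc x - u i.succ x)^2
      ≤ ∑ i : Fin N, (2 * ∑ x, (u i.castSucc x)^2 + 2 * ∑ x, (u i.succ x)^2) := by
    apply Finset.sum_le_sum; intro i _
    rw [Finset.mul_sum, Finset.mul_sum, ← Finset.sum_add_distrib]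
    apply Finset.sum_le_sum; intro x _
    nlinarith [sq_nonneg (u i.castSucc x + u i.succ x)]
  have h2 : ∑ i : Fin N, ∑ x, (u i.castSucc x)^2 ≤ ∑ i, ∑ x, (u i x)^2 := by
    rw [Fin.sum_univ_castSucc (f := fun i => ∑ x, (u i x)^2)]
    have := hG (Fin.last N); linarith
  have h3 : ∑ i : Fin N, ∑ x, (u i.succ x)^2 ≤ ∑ i, ∑ x, (u i x)^2 := by
    rw [Fin.sum_univ_succ (f := fun i => ∑ x, (u i x)^2)]
    have := hG 0; linarith
  have hsplit : ∑ i : Fin N, (2 * ∑ x, (u i.castSucc x)^2 + 2 * ∑ x, (u i.succ x)^2)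
      = 2 * (∑ i : Fin N, ∑ x, (u i.castSucc x)^2) + 2 * (∑ i : Fin N, ∑ x, (u i.succ x)^2) := by
    rw [Finset.sum_add_distrib, ← Finset.mul_sum, ← Finset.mul_sum]
  linarith [step, hsplit.le, hsplit.ge]

lemma sum2flat {α β : Type*} [Fintype α] [Fintype β] (f : α → β → ℝ) :
    ∑ i, ∑ j, f i j = ∑ p : α × β, f p.1 p.2 := by
  rw [Fintype.sum_prod_type]

lemma diffOp_bound (T : Fin (m+1) → Fin (n+1) → Fin (K+1) → ℝ) :
    (∑ i, ∑ j, ∑ k, ((diffOp T).1 i j k)^2) + (∑ i, ∑ j, ∑ k, ((diffOp T).2.1 i j k)^2)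
      + (∑ i, ∑ j, ∑ k, ((diffOp T).2.2 i j k)^2)
      ≤ 12 * ∑ i, ∑ j, ∑ k, (T i j k)^2 := by
  have h1 : (∑ i, ∑ j, ∑ k, ((diffOp T).1 i j k)^2) ≤ 4 * ∑ i, ∑ j, ∑ k, (T i j k)^2 := by
    have := key1 (fun i (p : Fin (n+1) × Fin (K+1)) => T i p.1 p.2)
    simp only [diffOp]
    calc ∑ i : Fin m, ∑ j, ∑ k, (T i.castSucc j k - T i.succ j k)^2
        = ∑ i : Fin m, ∑ p : Fin (n+1) × Fin (K+1), (T i.castSucc p.1 p.2 - T i.succ p.1 p.2)^2 := by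
          apply Finset.sum_congr rfl; intro i _
          exact sum2flat fun j k => (T i.castSucc j k - T i.succ j k)^2
      _ ≤ 4 * ∑ i, ∑ p : Fin (n+1) × Fin (K+1), (T i p.1 p.2)^2 := this
      _ = 4 * ∑ i, ∑ j, ∑ k, (T i j k)^2 := by
          congr 1; apply Finset.sum_congr rfl; intro i _
          exact (sum2flat fun j k => (T i j k)^2).symm
  have h2 : (∑ i, ∑ j, ∑ k, ((diffOp T).2.1 i j k)^2) ≤ 4 * ∑ i, ∑ j, ∑ k, (T i j k)^2 := by
    simp only [diffOp]
    have pt : ∀ i : Fin (m+1), ∑ j : Fin n, ∑ k, (T i j.castSucc k - T i j.succ k)^2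
        ≤ 4 * ∑ j : Fin (n+1), ∑ k, (T i j k)^2 := fun i => key1 (fun j k => T i j k)
    calc ∑ i, ∑ j : Fin n, ∑ k, (T i j.castSucc k - T i j.succ k)^2
        ≤ ∑ i, 4 * ∑ j : Fin (n+1), ∑ k, (T i j k)^2 := Finset.sum_le_sum fun i _ => pt i
      _ = 4 * ∑ i, ∑ j, ∑ k, (T i j k)^2 := by rw [← Finset.mul_sum]
  have h3 : (∑ i, ∑ j, ∑ k, ((diffOp T).2.2 i j k)^2) ≤ 4 * ∑ i, ∑ j, ∑ k, (T i j k)^2 := by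
    simp only [diffOp]
    have pt : ∀ (i : Fin (m+1)) (j : Fin (n+1)), ∑ k : Fin K, (T i j k.castSucc - T i j k.succ)^2
        ≤ 4 * ∑ k : Fin (K+1), (T i j k)^2 := by
      intro i j
      have := key1 (ι := Unit) (fun k _ => T i j k)
      simpa using this
    calc ∑ i, ∑ j, ∑ k : Fin K, (T i j k.castSucc - T i j k.succ)^2
        ≤ ∑ i, ∑ j, 4 * ∑ k : Fin (K+1), (T i j k)^2 := by
          apply Finset.sum_le_sum; intro i _; exact Finset.sum_le_sum fun j _ => pt i j
      _ = 4 * ∑ i, ∑ j, ∑ k, (T i j k)^2 := by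
          simp only [← Finset.mul_sum]
  linarith
end Diff

section Proj
variable {m n K : ℕ}

local notation "Tens" => (Fin (m+1) → Fin (n+1) → Fin (K+1) → ℝ)

noncomputable def ssq (T : Fin (m+1) → Fin (n+1) → Fin (K+1) → ℝ) : ℝ :=
  ∑ i, ∑ j, ∑ k, (T i j k)^2

noncomputable def inn (A B : Fin (m+1) → Fin (n+1) → Fin (K+1) → ℝ) : ℝ :=
  ∑ p : Fin (m+1) × Fin (n+1) × Fin (K+1), A p.1 p.2.1 p.2.2 * B p.1 p.2.1 p.2.2

lemma ssq_flat (T : Tens) : ssq T = ∑ p : Fin (m+1) × Fin (n+1) × Fin (K+1),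
    (T p.1 p.2.1 p.2.2)^2 := by
  rw [ssq, Fintype.sum_prod_type]
  apply Finset.sum_congr rfl; intro i _
  rw [Fintype.sum_prod_type]

lemma ssq_nonneg (T : Tens) : 0 ≤ ssq T := by
  rw [ssq]; positivity

lemma inn_self (T : Tens) : inn T T = ssq T := by
  rw [ssq_flat, inn]; exact Finset.sum_congr rfl fun p _ => (sq (T p.1 p.2.1 p.2.2)).symm

lemma fnorm_eq (T : Tens) : fnorm T = Real.sqrt (ssq T) := rfl

lemma ssq_expand (A B : Tens) (t : ℝ) :
    ssq (A - t • B) = ssq A - 2*t*inn A B + t^2 * ssq B := by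
  simp only [ssq_flat, inn, Pi.sub_apply, Pi.smul_apply, smul_eq_mul]
  rw [Finset.mul_sum, Finset.mul_sum, ← Finset.sum_sub_distrib, ← Finset.sum_add_distrib]
  exact Finset.sum_congr rfl fun p _ => by ring

lemma ssq_sub_expand (A B : Tens) : ssq (A - B) = ssq A - 2*inn A B + ssq B := by
  have := ssq_expand A B 1
  simpa using this

lemma inn_CS (A B : Tens) : inn A B ≤ Real.sqrt (ssq A) * Real.sqrt (ssq B) := by
  have h := Finset.sum_mul_sq_le_sq_mul_sq Finset.univ
    (fun p : Fin (m+1) × Fin (n+1) × Fin (K+1) => A p.1 p.2.1 p.2.2)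
    (fun p => B p.1 p.2.1 p.2.2)
  have h2 : inn A B ≤ Real.sqrt ((inn A B)^2) := by
    rw [Real.sqrt_sq_eq_abs]; exact le_abs_self _
  calc inn A B ≤ Real.sqrt ((inn A B)^2) := h2
    _ ≤ Real.sqrt (ssq A * ssq B) := by
        apply Real.sqrt_le_sqrt
        rw [ssq_flat, ssq_flat]; exact h
    _ = Real.sqrt (ssq A) * Real.sqrt (ssq B) := Real.sqrt_mul (ssq_nonneg A) _

end Proj

section Proj2
variable {m n K : ℕ} {C : Set (Fin (m+1) → Fin (n+1) → Fin (K+1) → ℝ)}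
  {Pc : (Fin (m+1) → Fin (n+1) → Fin (K+1) → ℝ) → (Fin (m+1) → Fin (n+1) → Fin (K+1) → ℝ)}

lemma proj_sq (hproj : ∀ x, Pc x ∈ C ∧ ∀ y ∈ C, fnorm (x - Pc x) ≤ fnorm (x - y))
    (x y : Fin (m+1) → Fin (n+1) → Fin (K+1) → ℝ) (hy : y ∈ C) :
    ssq (x - Pc x) ≤ ssq (x - y) := by
  have h := (hproj x).2 y hy
  rw [fnorm_eq, fnorm_eq] at h
  calc ssq (x - Pc x) = (Real.sqrt (ssq (x - Pc x)))^2 := (Real.sq_sqrt (ssq_nonneg _)).symm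
    _ ≤ (Real.sqrt (ssq (x - y)))^2 := by
        apply pow_le_pow_left₀ (Real.sqrt_nonneg _) h
    _ = ssq (x - y) := Real.sq_sqrt (ssq_nonneg _)

lemma proj_varineq (hconv : Convex ℝ C)
    (hproj : ∀ x, Pc x ∈ C ∧ ∀ y ∈ C, fnorm (x - Pc x) ≤ fnorm (x - y))
    (x y : Fin (m+1) → Fin (n+1) → Fin (K+1) → ℝ) (hy : y ∈ C) :
    inn (x - Pc x) (y - Pc x) ≤ 0 := by
  have hu : Pc x ∈ C := (hproj x).1
  by_contra hpos
  push_neg at hpos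
  set u := Pc x with hu'
  set ε := inn (x - u) (y - u) with hε
  set M := ssq (y - u) with hM'
  have hM : 0 ≤ M := ssq_nonneg _
  have key : ∀ t : ℝ, 0 < t → t ≤ 1 → 2 * ε ≤ t * M := by
    intro t ht ht1
    have hz : (1 - t) • u + t • y ∈ C := hconv hu hy (by linarith) ht.le (by ring)
    have hxz : x - ((1 - t) • u + t • y) = (x - u) - t • (y - u) := by
      funext i j k
      simp only [Pi.sub_apply, Pi.add_apply, Pi.smul_apply, smul_eq_mul]
      ring
    have h1 : ssq (x - u) ≤ ssq ((x - u) - t • (y - u)) := by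
      rw [← hxz]; exact proj_sq hproj x _ hz
    rw [ssq_expand] at h1
    nlinarith [sq_nonneg t]
  set t := min 1 (ε / (M + 1)) with ht'
  have htpos : 0 < t := lt_min one_pos (div_pos hpos (by linarith))
  have h1 := key t htpos (min_le_left _ _)
  have ht2 : t * (M + 1) ≤ ε := by
    have := min_le_right 1 (ε / (M + 1))
    calc t * (M + 1) ≤ (ε / (M + 1)) * (M + 1) := by
          apply mul_le_mul_of_nonneg_right this (by linarith)
      _ = ε := by field_simp
  nlinarith

lemma proj_nonexp (hconv : Convex ℝ C)
    (hproj : ∀ x, Pc x ∈ C ∧ ∀ y ∈ C, fnorm (x - Pc x) ≤ fnorm (x - y))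
    (x y : Fin (m+1) → Fin (n+1) → Fin (K+1) → ℝ) :
    ssq (Pc x - Pc y) ≤ ssq (x - y) := by
  set u := Pc x with hu'; set v := Pc y with hv'
  have h1 : inn (x - u) (v - u) ≤ 0 := proj_varineq hconv hproj x v (hproj y).1
  have h2 : inn (y - v) (u - v) ≤ 0 := proj_varineq hconv hproj y u (hproj x).1
  have hid : inn (x - u) (v - u) + inn (y - v) (u - v)
      = ssq (u - v) - inn (x - y) (u - v) := by
    simp only [inn, ssq_flat, Pi.sub_apply]
    rw [← Finset.sum_add_distrib, ← Finset.sum_sub_distrib]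
    exact Finset.sum_congr rfl fun p _ => by ring
  have h3 : ssq (u - v) ≤ inn (x - y) (u - v) := by linarith
  have hcs := inn_CS (x - y) (u - v)
  set a := Real.sqrt (ssq (u - v)) with ha'
  set b := Real.sqrt (ssq (x - y)) with hb'
  have ha : 0 ≤ a := Real.sqrt_nonneg _
  have hb : 0 ≤ b := Real.sqrt_nonneg _
  have hsq : ssq (u - v) = a^2 := (Real.sq_sqrt (ssq_nonneg _)).symm
  have hsq2 : ssq (x - y) = b^2 := (Real.sq_sqrt (ssq_nonneg _)).symm
  have h4 : a^2 ≤ b * a := by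
    rw [← hsq]; exact h3.trans hcs
  rw [hsq, hsq2]
  nlinarith [h4, sq_nonneg (a - b)]

end Proj2

section Main
variable {m n K : ℕ}

noncomputable def Tq (v : (Fin m → Fin (n + 1) → Fin (K + 1) → ℝ) ×
    (Fin (m + 1) → Fin n → Fin (K + 1) → ℝ) × (Fin (m + 1) → Fin (n + 1) → Fin K → ℝ)) : ℝ :=
  (∑ i, ∑ j, ∑ k, (v.1 i j k) ^ 2) + (∑ i, ∑ j, ∑ k, (v.2.1 i j k) ^ 2) +
    (∑ i, ∑ j, ∑ k, (v.2.2 i j k) ^ 2)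

lemma tnorm_eq (v) : tnorm (m := m) (n := n) (K := K) v = Real.sqrt (Tq v) := rfl

lemma Tq_nonneg (v) : 0 ≤ Tq (m := m) (n := n) (K := K) v := by
  rw [Tq]; positivity

lemma Tq_smul (c : ℝ) (v) : Tq (m := m) (n := n) (K := K) (c • v) = c^2 * Tq v := by
  simp only [Tq, Prod.smul_fst, Prod.smul_snd, Pi.smul_apply, smul_eq_mul, mul_pow,
    ← Finset.mul_sum]
  ring

lemma ssq_smul (c : ℝ) (T : Fin (m+1) → Fin (n+1) → Fin (K+1) → ℝ) :
    ssq (c • T) = c^2 * ssq T := by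
  simp only [ssq, Pi.smul_apply, smul_eq_mul, mul_pow, ← Finset.mul_sum]

lemma diffOp_sub (X Y : Fin (m+1) → Fin (n+1) → Fin (K+1) → ℝ) :
    diffOp X - diffOp Y = diffOp (X - Y) := by
  simp only [diffOp, Prod.mk_sub_mk, Prod.mk.injEq]
  refine ⟨?_, ?_, ?_⟩ <;> funext i j k <;> simp <;> ring

lemma diffOp_bound' (T : Fin (m+1) → Fin (n+1) → Fin (K+1) → ℝ) :
    Tq (diffOp T) ≤ 12 * ssq T := diffOp_bound T

end Main

theorem dual_gradient_lipschitz_24 (m n K : ℕ)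
    (S : Fin (m + 1) → Fin (n + 1) → Fin (K + 1) → ℝ)
    (lam : ℝ) (hlam : 0 < lam)
    (C : Set (Fin (m + 1) → Fin (n + 1) → Fin (K + 1) → ℝ))
    (hne : C.Nonempty) (hclosed : IsClosed C) (hconv : Convex ℝ C)
    (Pc : (Fin (m + 1) → Fin (n + 1) → Fin (K + 1) → ℝ) →
      (Fin (m + 1) → Fin (n + 1) → Fin (K + 1) → ℝ))
    (hproj : ∀ x, Pc x ∈ C ∧ ∀ y ∈ C, fnorm (x - Pc x) ≤ fnorm (x - y))
    (g : ((Fin m → Fin (n + 1) → Fin (K + 1) → ℝ) × (Fin (m + 1) → Fin n → Fin (K + 1) → ℝ) ×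
          (Fin (m + 1) → Fin (n + 1) → Fin K → ℝ)) →
        ((Fin m → Fin (n + 1) → Fin (K + 1) → ℝ) × (Fin (m + 1) → Fin n → Fin (K + 1) → ℝ) ×
          (Fin (m + 1) → Fin (n + 1) → Fin K → ℝ)))
    (hg : g = fun v => (-(2 * lam)) • diffOp (Pc (S - lam • (fun i j k => Ldiv v.1 v.2.1 v.2.2 i j k: Fin (m + 1) → Fin (n + 1) → Fin (K + 1) → ℝ)))) :
    ∀ v w, tnorm (g v - g w) ≤ 24 * lam ^ 2 * tnorm (v - w) := by
  intro v w
  subst hg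
  set A := S - lam • (fun i j k => Ldiv v.1 v.2.1 v.2.2 i j k) with hA
  set B := S - lam • (fun i j k => Ldiv w.1 w.2.1 w.2.2 i j k) with hB
  have hgd : (fun v => (-(2 * lam)) • diffOp (Pc (S - lam • (fun i j k => Ldiv v.1 v.2.1 v.2.2 i j k: Fin (m + 1) → Fin (n + 1) → Fin (K + 1) → ℝ)))) v
      - (fun v => (-(2 * lam)) • diffOp (Pc (S - lam • (fun i j k => Ldiv v.1 v.2.1 v.2.2 i j k: Fin (m + 1) → Fin (n + 1) → Fin (K + 1) → ℝ)))) w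
      = (-(2 * lam)) • diffOp (Pc A - Pc B) := by
    simp only [← hA, ← hB, ← smul_sub, diffOp_sub]
  rw [hgd]
  -- squared chain
  have s1 : Tq ((-(2 * lam)) • diffOp (Pc A - Pc B)) = 4 * lam^2 * Tq (diffOp (Pc A - Pc B)) := by
    rw [Tq_smul]; ring
  have s2 : Tq (diffOp (Pc A - Pc B)) ≤ 12 * ssq (Pc A - Pc B) := diffOp_bound' _
  have s3 : ssq (Pc A - Pc B) ≤ ssq (A - B) := proj_nonexp hconv hproj A B
  have hAB : A - B = (-lam) • (fun i j k =>
      Ldiv (v.1 - w.1) (v.2.1 - w.2.1) (v.2.2 - w.2.2) i j k) := by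
    funext i j k
    simp only [hA, hB, Pi.sub_apply, Pi.smul_apply, smul_eq_mul, Ldiv, ext3_sub]
    ring
  have s4 : ssq (A - B) = lam^2 * ssq (fun i j k =>
      Ldiv (v.1 - w.1) (v.2.1 - w.2.1) (v.2.2 - w.2.2) i j k) := by
    rw [hAB, ssq_smul]; ring
  have s5 : ssq (fun i j k => Ldiv (v.1 - w.1) (v.2.1 - w.2.1) (v.2.2 - w.2.2) i j k)
      ≤ 12 * Tq (v - w) := by
    have := Ldiv_bound (v.1 - w.1) (v.2.1 - w.2.1) (v.2.2 - w.2.2)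
    simpa [ssq, Tq] using this
  have hchain : Tq ((-(2 * lam)) • diffOp (Pc A - Pc B)) ≤ 576 * lam^4 * Tq (v - w) := by
    have h4 : (0:ℝ) ≤ 4 * lam^2 := by positivity
    have h48 : (0:ℝ) ≤ 48 * lam^2 := by positivity
    have h48' : (0:ℝ) ≤ 48 * lam^4 := by positivity
    calc Tq ((-(2 * lam)) • diffOp (Pc A - Pc B))
        = 4 * lam^2 * Tq (diffOp (Pc A - Pc B)) := s1
      _ ≤ 4 * lam^2 * (12 * ssq (Pc A - Pc B)) := by nlinarith [s2]
      _ = 48 * lam^2 * ssq (Pc A - Pc B) := by ring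
      _ ≤ 48 * lam^2 * ssq (A - B) := by nlinarith [s3]
      _ = 48 * lam^4 * ssq (fun i j k =>
            Ldiv (v.1 - w.1) (v.2.1 - w.2.1) (v.2.2 - w.2.2) i j k) := by rw [s4]; ring
      _ ≤ 48 * lam^4 * (12 * Tq (v - w)) := by nlinarith [s5]
      _ = 576 * lam^4 * Tq (v - w) := by ring
  rw [tnorm_eq, tnorm_eq]
  calc Real.sqrt (Tq ((-(2 * lam)) • diffOp (Pc A - Pc B)))
      ≤ Real.sqrt (576 * lam^4 * Tq (v - w)) := Real.sqrt_le_sqrt hchain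
    _ = 24 * lam ^ 2 * Real.sqrt (Tq (v - w)) := by
        rw [show (576:ℝ) * lam^4 * Tq (v - w) = (24 * lam^2)^2 * Tq (v - w) by ring,
          Real.sqrt_mul (sq_nonneg _), Real.sqrt_sq (by positivity)]
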